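/- arXiv:1803.03694 — 3 statements merged into one kernel-verified Lean document; each statement's English description precedes it below -/
import Mathlib

section
/- Barrier-certificate safety (Theorem 1): Let f : ℝⁿ × ℝᵐ → ℝⁿ be continuous, let X, X_I, X_U ⊆ ℝⁿ and D ⊆ ℝᵐ be given sets, and let V : ℝⁿ → ℝ be differentiable. Suppose (i) V(x) ≤ 0 for all x ∈ X_I, (ii) V(x) > 0 for all x ∈ X_U, and (iii) the derivative of V at x applied to f(x,d) is strictly negative for all (x,d) ∈ X × D. Then for every T ≥ 0, every differentiable trajectory x : ℝ → ℝⁿ and measurable-free disturbance signal d : ℝ → ℝᵐ satisfying d(t) ∈ D and x'(t) = f(x(t), d(t)) for all t ∈ [0,T], with x(0) ∈ X_I and x(t) ∈ X for all t ∈ [0,T], one has x(t) ∉ X_U for every t ∈ [0,T]. In particular X_I is a region of safety. -/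
/-! By the chain rule, condition (iii) makes `V` nonincreasing along every trajectory that stays
in `X`, so `V ≤ 0` persists from the initial point and the trajectory never meets `V > 0`. -/

open Set

theorem antitoneOn_comp_of_fderiv_apply_nonpos {E : Type*} [NormedAddCommGroup E]
    [NormedSpace ℝ E] {V : E → ℝ} {γ γ' : ℝ → E} {s : Set ℝ} (hs : Convex ℝ s)
    (hV : ∀ t ∈ s, DifferentiableAt ℝ V (γ t)) (hγ : ∀ t ∈ s, HasDerivAt γ (γ' t) t)
    (hVγ : ∀ t ∈ s, fderiv ℝ V (γ t) (γ' t) ≤ 0) : AntitoneOn (V ∘ γ) s := by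
  have hderiv : ∀ t ∈ s, HasDerivAt (V ∘ γ) (fderiv ℝ V (γ t) (γ' t)) t := fun t ht =>
    (hV t ht).hasFDerivAt.comp_hasDerivAt t (hγ t ht)
  exact antitoneOn_of_hasDerivWithinAt_nonpos hs
    (fun t ht => (hderiv t ht).continuousAt.continuousWithinAt)
    (fun t ht => (hderiv t (interior_subset ht)).hasDerivWithinAt)
    (fun t ht => hVγ t (interior_subset ht))

theorem barrier_certificate_safety_general {n m : ℕ}
    (f : (Fin n → ℝ) → (Fin m → ℝ) → (Fin n → ℝ))
    (X XI XU : Set (Fin n → ℝ)) (D : Set (Fin m → ℝ))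
    (V : (Fin n → ℝ) → ℝ) (hV : Differentiable ℝ V)
    (hVI : ∀ x ∈ XI, V x ≤ 0)
    (hVU : ∀ x ∈ XU, V x > 0)
    (hVdec : ∀ x ∈ X, ∀ δ ∈ D, fderiv ℝ V x (f x δ) < 0)
    (T : ℝ)
    (x : ℝ → (Fin n → ℝ)) (d : ℝ → (Fin m → ℝ))
    (hd : ∀ t ∈ Set.Icc (0 : ℝ) T, d t ∈ D)
    (hode : ∀ t ∈ Set.Icc (0 : ℝ) T, HasDerivAt x (f (x t) (d t)) t)
    (hx0 : x 0 ∈ XI)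
    (hxX : ∀ t ∈ Set.Icc (0 : ℝ) T, x t ∈ X) :
    ∀ t ∈ Set.Icc (0 : ℝ) T, x t ∉ XU := by
  intro t ht hxU
  have hV_antitone : AntitoneOn (V ∘ x) (Icc 0 T) :=
    antitoneOn_comp_of_fderiv_apply_nonpos (convex_Icc 0 T) (fun s _ => hV (x s)) hode
      (fun s hs => (hVdec _ (hxX s hs) _ (hd s hs)).le)
  have hVt : V (x t) ≤ V (x 0) := hV_antitone ⟨le_rfl, ht.1.trans ht.2⟩ ht ht.1
  linarith [hVI _ hx0, hVU _ hxU]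

/-- Barrier-certificate safety (Theorem 1). -/
theorem barrier_certificate_safety {n m : ℕ}
    (f : (Fin n → ℝ) → (Fin m → ℝ) → (Fin n → ℝ))
    (hf : Continuous (fun p : (Fin n → ℝ) × (Fin m → ℝ) => f p.1 p.2))
    (X XI XU : Set (Fin n → ℝ)) (D : Set (Fin m → ℝ))
    (V : (Fin n → ℝ) → ℝ) (hV : Differentiable ℝ V)
    (hVI : ∀ x ∈ XI, V x ≤ 0)
    (hVU : ∀ x ∈ XU, V x > 0)
    (hVdec : ∀ x ∈ X, ∀ δ ∈ D, fderiv ℝ V x (f x δ) < 0)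
    (T : ℝ) (hT : 0 ≤ T)
    (x : ℝ → (Fin n → ℝ)) (d : ℝ → (Fin m → ℝ))
    (hd : ∀ t ∈ Set.Icc (0 : ℝ) T, d t ∈ D)
    (hode : ∀ t ∈ Set.Icc (0 : ℝ) T, HasDerivAt x (f (x t) (d t)) t)
    (hx0 : x 0 ∈ XI)
    (hxX : ∀ t ∈ Set.Icc (0 : ℝ) T, x t ∈ X) :
    ∀ t ∈ Set.Icc (0 : ℝ) T, x t ∉ XU :=
  barrier_certificate_safety_general f X XI XU D V hV hVI hVU hVdec T x d hd hode hx0 hxX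
end

section
/- Positivity of the barrier function on the backward reachable set (interpretation of constraints (7b)–(7c)): Let f : ℝⁿ × ℝᵐ → ℝⁿ, let X ⊆ ℝⁿ, X_U ⊆ ℝⁿ, D ⊆ ℝᵐ, and let B : ℝⁿ → ℝ be differentiable with (i) B(x) > 0 for all x ∈ X_U and (ii) the derivative of B at x applied to f(x,d) nonpositive for all (x,d) ∈ X × D. Then for every T ≥ 0 and every differentiable trajectory x : ℝ → ℝⁿ with disturbance d : ℝ → ℝᵐ satisfying d(t) ∈ D, x'(t) = f(x(t), d(t)), and x(t) ∈ X for all t ∈ [0,T], if x(T) ∈ X_U then B(x(0)) > 0. Consequently B is strictly positive on the invariant backward reachable set of X_U. -/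
open Set

theorem antitoneOn_comp_of_fderiv_apply_nonpos_s3 {E : Type*} [NormedAddCommGroup E]
    [NormedSpace ℝ E] {B : E → ℝ} {x v : ℝ → E} {I : Set ℝ} (hI : Convex ℝ I)
    (hB : ∀ t ∈ I, DifferentiableAt ℝ B (x t)) (hx : ∀ t ∈ I, HasDerivAt x (v t) t)
    (hdec : ∀ t ∈ I, fderiv ℝ B (x t) (v t) ≤ 0) :
    AntitoneOn (B ∘ x) I := by
  have hderiv : ∀ t ∈ I, HasDerivAt (B ∘ x) (fderiv ℝ B (x t) (v t)) t := fun t ht =>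
    (hB t ht).hasFDerivAt.comp_hasDerivAt t (hx t ht)
  exact antitoneOn_of_hasDerivWithinAt_nonpos hI
    (fun t ht => (hderiv t ht).continuousAt.continuousWithinAt)
    (fun t ht => (hderiv t (interior_subset ht)).hasDerivWithinAt)
    (fun t ht => hdec t (interior_subset ht))

/-- Positivity of the barrier function on the backward reachable set. -/
theorem barrier_positive_on_backward_reachable {n m : ℕ}
    (f : (Fin n → ℝ) → (Fin m → ℝ) → (Fin n → ℝ))
    (X XU : Set (Fin n → ℝ)) (D : Set (Fin m → ℝ))
    (B : (Fin n → ℝ) → ℝ) (hB : Differentiable ℝ B)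
    (hBU : ∀ x ∈ XU, B x > 0)
    (hBdec : ∀ x ∈ X, ∀ δ ∈ D, fderiv ℝ B x (f x δ) ≤ 0)
    (T : ℝ) (hT : 0 ≤ T)
    (x : ℝ → (Fin n → ℝ)) (d : ℝ → (Fin m → ℝ))
    (hd : ∀ t ∈ Set.Icc (0 : ℝ) T, d t ∈ D)
    (hode : ∀ t ∈ Set.Icc (0 : ℝ) T, HasDerivAt x (f (x t) (d t)) t)
    (hxX : ∀ t ∈ Set.Icc (0 : ℝ) T, x t ∈ X)
    (hxT : x T ∈ XU) :
    B (x 0) > 0 := by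
  have hanti : AntitoneOn (B ∘ x) (Icc 0 T) :=
    antitoneOn_comp_of_fderiv_apply_nonpos_s3 (convex_Icc 0 T) (fun t _ => hB (x t)) hode
      fun t ht => hBdec _ (hxX t ht) _ (hd t ht)
  calc 0 < B (x T) := hBU _ hxT
    _ ≤ B (x 0) := hanti (left_mem_Icc.mpr hT) (right_mem_Icc.mpr hT) hT
end

section
/- The zero sublevel set of a feasible barrier function is a region of safety: Let f : ℝⁿ × ℝᵐ → ℝⁿ, let X ⊆ ℝⁿ, X_U ⊆ ℝⁿ, D ⊆ ℝᵐ, and let B : ℝⁿ → ℝ be differentiable with (i) B(x) > 0 for all x ∈ X_U and (ii) the derivative of B at x applied to f(x,d) nonpositive for all (x,d) ∈ X × D. Then the set S = {x ∈ X : B(x) ≤ 0} is a region of safety: for every T ≥ 0, every differentiable trajectory x : ℝ → ℝⁿ with disturbance d : ℝ → ℝᵐ satisfying d(t) ∈ D, x'(t) = f(x(t), d(t)), x(0) ∈ S, and x(t) ∈ X for all t ∈ [0,T], one has x(t) ∉ X_U for all t ∈ [0,T]. -/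
open Set

theorem antitoneOn_comp_of_fderiv_nonpos {E : Type*} [NormedAddCommGroup E] [NormedSpace ℝ E]
    {D : Set ℝ} (hD : Convex ℝ D) {B : E → ℝ} {x v : ℝ → E}
    (hB : ∀ t ∈ D, DifferentiableAt ℝ B (x t)) (hx : ∀ t ∈ D, HasDerivAt x (v t) t)
    (hdecr : ∀ t ∈ D, fderiv ℝ B (x t) (v t) ≤ 0) :
    AntitoneOn (B ∘ x) D := by
  have hderiv : ∀ t ∈ D, HasDerivAt (B ∘ x) (fderiv ℝ B (x t) (v t)) t := fun t ht =>
    (hB t ht).hasFDerivAt.comp_hasDerivAt t (hx t ht)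
  exact antitoneOn_of_hasDerivWithinAt_nonpos hD
    (fun t ht => (hderiv t ht).continuousAt.continuousWithinAt)
    (fun t ht => (hderiv t (interior_subset ht)).hasDerivWithinAt)
    (fun t ht => hdecr t (interior_subset ht))

theorem barrier_sublevel_is_ROS_general {n m : ℕ}
    (f : (Fin n → ℝ) → (Fin m → ℝ) → (Fin n → ℝ))
    (X XU : Set (Fin n → ℝ)) (D : Set (Fin m → ℝ))
    (B : (Fin n → ℝ) → ℝ) (hB : Differentiable ℝ B)
    (hBU : ∀ x ∈ XU, B x > 0)
    (hBdec : ∀ x ∈ X, ∀ δ ∈ D, fderiv ℝ B x (f x δ) ≤ 0)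
    (T : ℝ)
    (x : ℝ → (Fin n → ℝ)) (d : ℝ → (Fin m → ℝ))
    (hd : ∀ t ∈ Set.Icc (0 : ℝ) T, d t ∈ D)
    (hode : ∀ t ∈ Set.Icc (0 : ℝ) T, HasDerivAt x (f (x t) (d t)) t)
    (hx0 : x 0 ∈ {y ∈ X | B y ≤ 0})
    (hxX : ∀ t ∈ Set.Icc (0 : ℝ) T, x t ∈ X) :
    ∀ t ∈ Set.Icc (0 : ℝ) T, x t ∉ XU := by
  have hanti : AntitoneOn (B ∘ x) (Icc 0 T) :=
    antitoneOn_comp_of_fderiv_nonpos (convex_Icc 0 T) (fun t _ => hB (x t)) hode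
      (fun t ht => hBdec (x t) (hxX t ht) (d t) (hd t ht))
  intro t ht hU
  have hBt : B (x t) ≤ B (x 0) := hanti (left_mem_Icc.2 (ht.1.trans ht.2)) ht ht.1
  exact (hBt.trans hx0.2).not_gt (hBU (x t) hU)

/-- The zero sublevel set of a feasible barrier function is a region of safety. -/
theorem barrier_sublevel_is_ROS {n m : ℕ}
    (f : (Fin n → ℝ) → (Fin m → ℝ) → (Fin n → ℝ))
    (X XU : Set (Fin n → ℝ)) (D : Set (Fin m → ℝ))
    (B : (Fin n → ℝ) → ℝ) (hB : Differentiable ℝ B)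
    (hBU : ∀ x ∈ XU, B x > 0)
    (hBdec : ∀ x ∈ X, ∀ δ ∈ D, fderiv ℝ B x (f x δ) ≤ 0)
    (T : ℝ) (hT : 0 ≤ T)
    (x : ℝ → (Fin n → ℝ)) (d : ℝ → (Fin m → ℝ))
    (hd : ∀ t ∈ Set.Icc (0 : ℝ) T, d t ∈ D)
    (hode : ∀ t ∈ Set.Icc (0 : ℝ) T, HasDerivAt x (f (x t) (d t)) t)
    (hx0 : x 0 ∈ {y ∈ X | B y ≤ 0})
    (hxX : ∀ t ∈ Set.Icc (0 : ℝ) T, x t ∈ X) :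
    ∀ t ∈ Set.Icc (0 : ℝ) T, x t ∉ XU :=
  barrier_sublevel_is_ROS_general f X XU D B hB hBU hBdec T x d hd hode hx0 hxX
end
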